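/- Let n, k, d be positive integers, μ₀ ≥ 1, β ∈ (0,1), σ₁* > 0. Let Ω ⊆ [n]×[n] be such that for every j ∈ [n] the set S_j = { i : (i,j) ∈ Ω } has exactly d elements. Let U ∈ ℝ^{n×k} have rows u_i with ‖u_i‖₂ ≤ √(5μ₀k/n), and let U* ∈ ℝ^{n×k} have rows u_i* with ‖u_i*‖₂ ≤ √(μ₀k/n). For j ∈ [n] let U_{S_j}, U*_{S_j} ∈ ℝ^{d×k} be the submatrices of U, U* whose rows are indexed by S_j; set C^j = (n/d)·U_{S_j}ᵀ U*_{S_j}, and let Ĉ^j = (n/d)·Û_jᵀ U*_{S_j} where Û_j ∈ ℝ^{d×k} is any matrix with ‖Û_j‖₂ ≤ √((2−β)d/n). Let V* ∈ ℝ^{n×k} have rows v_j* with ‖v_j*‖₂ ≤ √(μ₀k/n), and let Σ* ∈ ℝ^{k×k} satisfy ‖Σ*‖₂ ≤ σ₁*. Suppose that for every j ∈ [n], B̂^j ∈ ℝ^{k×k} is a symmetric positive definite matrix all of whose eigenvalues lie in [β, 2−β]. Then for every S ⊆ [n] and all row vectors x^1, …, x^n ∈ ℝ^{1×k} with Σ_{j∈[n]}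 ‖x^j‖₂² = 1, one has Σ_{j∈S} x^j (B̂^j)^{-1} (C^j − Ĉ^j) Σ* v_j* ≤ (7/β)·σ₁*·(μ₀k)^{3/2}·√(|S|/n). -/

import Mathlib

open Matrix
open scoped Classical

/-- Euclidean norm of a vector in `ℝ^k`. -/
noncomputable def vecNorm {k : ℕ} (v : Fin k → ℝ) : ℝ := Real.sqrt (∑ i, v i ^ 2)

/-- Spectral norm (largest singular value) of a real matrix. -/
noncomputable def specNorm {m n : ℕ} (A : Matrix (Fin m) (Fin n) ℝ) : ℝ :=
  sSup {c : ℝ | ∃ x : Fin n → ℝ, vecNorm x = 1 ∧ c = vecNorm (A.mulVec x)}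

/-- The left neighborhood `S_j = {i : (i,j) ∈ Ω}`. -/
def Sj {n : ℕ} (Ω : Finset (Fin n × Fin n)) (j : Fin n) : Finset (Fin n) :=
  Finset.univ.filter fun i => (i, j) ∈ Ω

/-! Each summand is at most `‖x^j‖ ‖(B̂^j)⁻¹‖ (‖C^j‖ + ‖Ĉ^j‖) ‖Σ*‖ ‖v_j*‖`, with
`‖(B̂^j)⁻¹‖ ≤ 1/β`. Incoherence controls the two middle factors: `C^j` is `n/d` times a sum of
`d` rank-one matrices `u_i u_i*ᵀ` of norm at most `√5 μ₀k/n`, so `‖C^j‖ ≤ √5 μ₀k`, and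
`‖Ĉ^j‖ ≤ (n/d) ‖Û_j‖ ‖U*_{S_j}‖_F ≤ √((2-β) μ₀k) ≤ √2 μ₀k`. Finally
`∑_{j∈S} ‖x^j‖ ≤ √|S|` by Cauchy–Schwarz, and `√5 + √2 ≤ 7`. -/

lemma vecNorm_nonneg {k : ℕ} (v : Fin k → ℝ) : 0 ≤ vecNorm v := Real.sqrt_nonneg _

lemma vecNorm_eq_norm_toLp {k : ℕ} (v : Fin k → ℝ) : vecNorm v = ‖WithLp.toLp 2 v‖ := by
  simp [vecNorm, EuclideanSpace.norm_eq]

lemma vecNorm_sq {k : ℕ} (v : Fin k → ℝ) : vecNorm v ^ 2 = v ⬝ᵥ v := by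
  rw [vecNorm, Real.sq_sqrt (by positivity)]
  simp [dotProduct, sq]

lemma vecNorm_smul {k : ℕ} (c : ℝ) (v : Fin k → ℝ) : vecNorm (c • v) = |c| * vecNorm v := by
  simp [vecNorm_eq_norm_toLp, norm_smul]

lemma vecNorm_sub_le {k : ℕ} (v w : Fin k → ℝ) : vecNorm (v - w) ≤ vecNorm v + vecNorm w := by
  simpa [vecNorm_eq_norm_toLp] using norm_sub_le (WithLp.toLp 2 v) (WithLp.toLp 2 w)

lemma vecNorm_sum_le {k : ℕ} {ι : Type*} (s : Finset ι) (f : ι → Fin k → ℝ) :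
    vecNorm (∑ i ∈ s, f i) ≤ ∑ i ∈ s, vecNorm (f i) := by
  simpa [vecNorm_eq_norm_toLp, WithLp.toLp_sum] using norm_sum_le s fun i => WithLp.toLp 2 (f i)

lemma abs_dotProduct_le {k : ℕ} (v w : Fin k → ℝ) : |v ⬝ᵥ w| ≤ vecNorm v * vecNorm w := by
  simpa [vecNorm_eq_norm_toLp, EuclideanSpace.inner_toLp_toLp, dotProduct_comm] using
    abs_real_inner_le_norm (WithLp.toLp 2 v) (WithLp.toLp 2 w)

lemma vecNorm_mulVec_le_frobenius {m k : ℕ} (A : Matrix (Fin m) (Fin k) ℝ) (y : Fin k → ℝ) :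
    vecNorm (A *ᵥ y) ≤ √(∑ i, vecNorm (A i) ^ 2) * vecNorm y := by
  have hrow (i : Fin m) : (A *ᵥ y) i ^ 2 ≤ vecNorm (A i) ^ 2 * vecNorm y ^ 2 := by
    rw [← mul_pow, ← sq_abs]
    exact pow_le_pow_left₀ (abs_nonneg _) (abs_dotProduct_le (A i) y) 2
  calc vecNorm (A *ᵥ y) ≤ √(∑ i, vecNorm (A i) ^ 2 * vecNorm y ^ 2) :=
        Real.sqrt_le_sqrt (Finset.sum_le_sum fun i _ => hrow i)
    _ = √(∑ i, vecNorm (A i) ^ 2) * vecNorm y := by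
        rw [← Finset.sum_mul, Real.sqrt_mul (by positivity), Real.sqrt_sq (vecNorm_nonneg y)]

lemma vecNorm_mulVec_le_of_rows {m k : ℕ} {A : Matrix (Fin m) (Fin k) ℝ} {b : ℝ} (hb : 0 ≤ b)
    (hA : ∀ i, vecNorm (A i) ≤ b) (y : Fin k → ℝ) : vecNorm (A *ᵥ y) ≤ √m * b * vecNorm y := by
  refine (vecNorm_mulVec_le_frobenius A y).trans (mul_le_mul_of_nonneg_right ?_ (vecNorm_nonneg y))
  calc √(∑ i, vecNorm (A i) ^ 2) ≤ √(∑ _i : Fin m, b ^ 2) :=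
        Real.sqrt_le_sqrt <|
          Finset.sum_le_sum fun i _ => pow_le_pow_left₀ (vecNorm_nonneg _) (hA i) 2
    _ = √m * b := by simp [Real.sqrt_mul, Real.sqrt_sq hb]

lemma specNorm_nonneg {m k : ℕ} (A : Matrix (Fin m) (Fin k) ℝ) : 0 ≤ specNorm A :=
  Real.sSup_nonneg fun _ ⟨_, _, hc⟩ => hc ▸ vecNorm_nonneg _

lemma vecNorm_mulVec_le_of_specNorm_le {m k : ℕ} {A : Matrix (Fin m) (Fin k) ℝ} {c : ℝ}
    (hA : specNorm A ≤ c) (y : Fin k → ℝ) : vecNorm (A *ᵥ y) ≤ c * vecNorm y := by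
  rcases (vecNorm_nonneg y).eq_or_lt with h0 | h0
  · simpa [← h0] using vecNorm_mulVec_le_frobenius A y
  have hbdd : BddAbove {c : ℝ | ∃ x : Fin k → ℝ, vecNorm x = 1 ∧ c = vecNorm (A *ᵥ x)} :=
    ⟨_, by rintro _ ⟨x, hx, rfl⟩; simpa [hx] using vecNorm_mulVec_le_frobenius A x⟩
  have hunit : vecNorm ((vecNorm y)⁻¹ • y) = 1 := by
    rw [vecNorm_smul, abs_inv, abs_of_pos h0, inv_mul_cancel₀ h0.ne']
  have h := (le_csSup hbdd ⟨_, hunit, rfl⟩).trans hA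
  rwa [mulVec_smul, vecNorm_smul, abs_inv, abs_of_pos h0, inv_mul_le_iff₀ h0, mul_comm] at h

lemma vecNorm_transpose_mulVec_le_of_specNorm_le {m k : ℕ} {A : Matrix (Fin m) (Fin k) ℝ}
    {c : ℝ} (hA : specNorm A ≤ c) (w : Fin m → ℝ) : vecNorm (Aᵀ *ᵥ w) ≤ c * vecNorm w := by
  have hc : 0 ≤ c := (specNorm_nonneg A).trans hA
  have key : vecNorm (Aᵀ *ᵥ w) ^ 2 ≤ vecNorm w * (c * vecNorm (Aᵀ *ᵥ w)) := by
    rw [vecNorm_sq]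
    nth_rw 1 [mulVec_transpose]
    rw [← dotProduct_mulVec]
    exact (le_abs_self _).trans <| (abs_dotProduct_le _ _).trans <|
      mul_le_mul_of_nonneg_left (vecNorm_mulVec_le_of_specNorm_le hA _) (vecNorm_nonneg w)
  nlinarith [vecNorm_nonneg (Aᵀ *ᵥ w), vecNorm_nonneg w, mul_nonneg hc (vecNorm_nonneg w)]

lemma posSemidef_sub_smul_one {n : Type*} [Fintype n] [DecidableEq n] {B : Matrix n n ℝ}
    (hB : B.IsHermitian) {β : ℝ} (h : ∀ i, β ≤ hB.eigenvalues i) : (B - β • 1).PosSemidef := by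
  rw [hB.spectral_theorem, ← Algebra.algebraMap_eq_smul_one,
    ← AlgHomClass.commutes (Unitary.conjStarAlgAut ℝ _ hB.eigenvectorUnitary) β, ← map_sub,
    Unitary.conjStarAlgAut_apply, Unitary.isUnit_coe.posSemidef_star_right_conjugate_iff,
    algebraMap_eq_diagonal, diagonal_sub, posSemidef_diagonal_iff]
  intro i
  simpa using h i

lemma mul_vecNorm_le_vecNorm_mulVec {k : ℕ} {B : Matrix (Fin k) (Fin k) ℝ} (hB : B.IsHermitian)
    {β : ℝ} (heig : ∀ l, β ≤ hB.eigenvalues l) (z : Fin k → ℝ) :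
    β * vecNorm z ≤ vecNorm (B *ᵥ z) := by
  have hquad : β * vecNorm z ^ 2 ≤ vecNorm z * vecNorm (B *ᵥ z) := by
    have h := (posSemidef_sub_smul_one hB heig).dotProduct_mulVec_nonneg z
    simp only [star_trivial, sub_mulVec, smul_mulVec, one_mulVec, dotProduct_sub,
      dotProduct_smul, smul_eq_mul, sub_nonneg] at h
    rw [vecNorm_sq]
    exact h.trans ((le_abs_self _).trans (abs_dotProduct_le _ _))
  rcases (vecNorm_nonneg z).eq_or_lt with h0 | h0
  · simpa [← h0] using vecNorm_nonneg (B *ᵥ z)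
  · nlinarith

lemma vecNorm_inv_mulVec_le {k : ℕ} {B : Matrix (Fin k) (Fin k) ℝ} (hB : B.IsHermitian)
    {β : ℝ} (hβ : 0 < β) (heig : ∀ l, β ≤ hB.eigenvalues l) (y : Fin k → ℝ) :
    vecNorm (B⁻¹ *ᵥ y) ≤ vecNorm y / β := by
  have hunit : IsUnit B :=
    (hB.posDef_iff_eigenvalues_pos.mpr fun l => hβ.trans_le (heig l)).isUnit
  have h := mul_vecNorm_le_vecNorm_mulVec hB heig (B⁻¹ *ᵥ y)
  rwa [mulVec_mulVec, mul_nonsing_inv _ ((isUnit_iff_isUnit_det B).mp hunit), one_mulVec,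
    ← le_div_iff₀' hβ] at h

lemma dotProduct_inv_mul_sub_mul_mulVec_le {k : ℕ} {B P Q Sig : Matrix (Fin k) (Fin k) ℝ}
    (hB : B.IsHermitian) {β : ℝ} (hβ : 0 < β) (heig : ∀ l, β ≤ hB.eigenvalues l)
    {p q σ r : ℝ} (hpq : 0 ≤ p + q) (hP : ∀ w, vecNorm (P *ᵥ w) ≤ p * vecNorm w)
    (hQ : ∀ w, vecNorm (Q *ᵥ w) ≤ q * vecNorm w) (hSig : specNorm Sig ≤ σ)
    (x : Fin k → ℝ) {v : Fin k → ℝ} (hv : vecNorm v ≤ r) :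
    x ⬝ᵥ ((B⁻¹ * (P - Q) * Sig) *ᵥ v) ≤ vecNorm x * ((p + q) * (σ * r) / β) := by
  have hw : vecNorm (Sig *ᵥ v) ≤ σ * r :=
    (vecNorm_mulVec_le_of_specNorm_le hSig v).trans
      (mul_le_mul_of_nonneg_left hv ((specNorm_nonneg Sig).trans hSig))
  have hPQ : vecNorm ((P - Q) *ᵥ (Sig *ᵥ v)) ≤ (p + q) * (σ * r) := by
    rw [sub_mulVec]
    calc _ ≤ p * vecNorm (Sig *ᵥ v) + q * vecNorm (Sig *ᵥ v) :=
          (vecNorm_sub_le _ _).trans (add_le_add (hP _) (hQ _))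
      _ ≤ (p + q) * (σ * r) := by rw [← add_mul]; exact mul_le_mul_of_nonneg_left hw hpq
  rw [← mulVec_mulVec, ← mulVec_mulVec]
  calc _ ≤ vecNorm x * vecNorm (B⁻¹ *ᵥ ((P - Q) *ᵥ (Sig *ᵥ v))) :=
        (le_abs_self _).trans (abs_dotProduct_le _ _)
    _ ≤ vecNorm x * ((p + q) * (σ * r) / β) := by
        gcongr
        · exact vecNorm_nonneg x
        · exact (vecNorm_inv_mulVec_le hB hβ heig _).trans (by gcongr)

lemma vecNorm_sum_vecMulVec_mulVec_le {k : ℕ} {ι : Type*} (s : Finset ι)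
    {u v : ι → Fin k → ℝ} {a b : ℝ} (hu : ∀ i ∈ s, vecNorm (u i) ≤ a)
    (hv : ∀ i ∈ s, vecNorm (v i) ≤ b) (w : Fin k → ℝ) :
    vecNorm ((∑ i ∈ s, vecMulVec (u i) (v i)) *ᵥ w) ≤ s.card * (a * b) * vecNorm w := by
  rw [sum_mulVec]
  refine (vecNorm_sum_le _ _).trans ?_
  rw [mul_assoc, ← nsmul_eq_mul, ← Finset.sum_const]
  refine Finset.sum_le_sum fun i hi => ?_
  have hdot : |v i ⬝ᵥ w| ≤ b * vecNorm w :=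
    (abs_dotProduct_le _ _).trans (mul_le_mul_of_nonneg_right (hv i hi) (vecNorm_nonneg w))
  rw [vecMulVec_mulVec, op_smul_eq_smul, vecNorm_smul]
  calc |v i ⬝ᵥ w| * vecNorm (u i) ≤ b * vecNorm w * a :=
        mul_le_mul hdot (hu i hi) (vecNorm_nonneg _) ((abs_nonneg _).trans hdot)
    _ = a * b * vecNorm w := by ring

lemma div_mul_div_le_one (a b : ℝ) : a / b * (b / a) ≤ 1 := by
  rw [div_mul_div_comm, mul_comm b a]
  exact div_self_le_one _

lemma sum_le_sqrt_card_of_sum_sq_le_one {ι : Type*} [Fintype ι] {f : ι → ℝ}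
    (hf : ∑ i, f i ^ 2 ≤ 1) (S : Finset ι) : ∑ i ∈ S, f i ≤ √S.card := by
  have hS : ∑ i ∈ S, f i ^ 2 ≤ 1 :=
    (Finset.sum_le_sum_of_subset_of_nonneg (Finset.subset_univ S) fun i _ _ => sq_nonneg _).trans hf
  refine Real.le_sqrt_of_sq_le ?_
  calc (∑ i ∈ S, f i) ^ 2 ≤ S.card * ∑ i ∈ S, f i ^ 2 := sq_sum_le_card_mul_sum_sq
    _ ≤ S.card := mul_le_of_le_one_right (Nat.cast_nonneg _) hS

section Sampling

variable {n k d : ℕ} {μ₀ : ℝ}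

lemma vecNorm_sampled_outer_sum_mulVec_le (hμ : 0 ≤ μ₀) (s : Finset (Fin n)) (hs : s.card = d)
    {U Ustar : Matrix (Fin n) (Fin k) ℝ}
    (hrows : ∀ i, vecNorm (U i) ≤ √(5 * μ₀ * k / n))
    (hrowsStar : ∀ i, vecNorm (Ustar i) ≤ √(μ₀ * k / n)) (w : Fin k → ℝ) :
    vecNorm ((((n : ℝ) / d) • ∑ i ∈ s, vecMulVec (U i) (Ustar i)) *ᵥ w)
      ≤ √5 * (μ₀ * k) * vecNorm w := by
  have hm : 0 ≤ μ₀ * k / n := by positivity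
  have hsqrt : √(5 * μ₀ * k / n) * √(μ₀ * k / n) = √5 * (μ₀ * k / n) := by
    rw [show 5 * μ₀ * k / n = 5 * (μ₀ * k / n) by ring, Real.sqrt_mul (by norm_num), mul_assoc,
      Real.mul_self_sqrt hm]
  rw [smul_mulVec, vecNorm_smul, abs_of_nonneg (by positivity)]
  calc (n : ℝ) / d * vecNorm ((∑ i ∈ s, vecMulVec (U i) (Ustar i)) *ᵥ w)
      ≤ n / d * (d * (√(5 * μ₀ * k / n) * √(μ₀ * k / n)) * vecNorm w) := by
        gcongr
        simpa [hs] using vecNorm_sum_vecMulVec_mulVec_le s (fun i _ => hrows i)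
          (fun i _ => hrowsStar i) w
    _ = √5 * (μ₀ * k) * (n / d * (d / n)) * vecNorm w := by rw [hsqrt]; ring
    _ ≤ √5 * (μ₀ * k) * vecNorm w :=
        mul_le_mul_of_nonneg_right
          (mul_le_of_le_one_right (by positivity) (div_mul_div_le_one _ _)) (vecNorm_nonneg w)

lemma vecNorm_sampled_transpose_mul_mulVec_le (hμk : 1 ≤ μ₀ * k) {β : ℝ} (hβ : 0 ≤ β)
    {Uhat M : Matrix (Fin d) (Fin k) ℝ} (hUhat : specNorm Uhat ≤ √((2 - β) * d / n))
    (hM : ∀ r, vecNorm (M r) ≤ √(μ₀ * k / n)) (w : Fin k → ℝ) :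
    vecNorm ((((n : ℝ) / d) • (Uhatᵀ * M)) *ᵥ w) ≤ √2 * (μ₀ * k) * vecNorm w := by
  have hsqrt : √((2 - β) * d / n) * (√d * √(μ₀ * k / n)) = √((2 - β) * (μ₀ * k)) * (d / n) := by
    rw [← Real.sqrt_mul (Nat.cast_nonneg d), ← Real.sqrt_mul' _ (by positivity),
      show (2 - β) * d / n * (d * (μ₀ * k / n)) = (2 - β) * (μ₀ * k) * (d / n) ^ 2 by ring,
      Real.sqrt_mul' _ (sq_nonneg _), Real.sqrt_sq (by positivity)]
  have hroot : √((2 - β) * (μ₀ * k)) ≤ √2 * (μ₀ * k) := by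
    calc √((2 - β) * (μ₀ * k)) ≤ √2 * √(μ₀ * k) := by
          rw [← Real.sqrt_mul zero_le_two]; gcongr; linarith
      _ ≤ √2 * (μ₀ * k) := by gcongr; exact Real.sqrt_le_self_iff.mpr (Or.inr hμk)
  rw [smul_mulVec, vecNorm_smul, abs_of_nonneg (by positivity), ← mulVec_mulVec]
  calc (n : ℝ) / d * vecNorm (Uhatᵀ *ᵥ (M *ᵥ w))
      ≤ n / d * (√((2 - β) * d / n) * (√d * √(μ₀ * k / n) * vecNorm w)) := by
        gcongr
        exact (vecNorm_transpose_mulVec_le_of_specNorm_le hUhat _).trans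
          (mul_le_mul_of_nonneg_left (vecNorm_mulVec_le_of_rows (Real.sqrt_nonneg _) hM w)
            (Real.sqrt_nonneg _))
    _ = √((2 - β) * (μ₀ * k)) * (n / d * (d / n)) * vecNorm w := by
        linear_combination ((n : ℝ) / d * vecNorm w) * hsqrt
    _ ≤ √2 * (μ₀ * k) * vecNorm w :=
        mul_le_mul_of_nonneg_right
          (mul_le_of_le_one_right (Real.sqrt_nonneg _) (div_mul_div_le_one _ _) |>.trans hroot)
          (vecNorm_nonneg w)

end Sampling

theorem stmt_6_general {n k d : ℕ} (hk : 0 < k)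
    (μ₀ β σ₁ : ℝ) (hμ : 1 ≤ μ₀) (hβ : β ∈ Set.Ioo (0 : ℝ) 1)
    (Ω : Finset (Fin n × Fin n)) (hΩ : ∀ j : Fin n, (Sj Ω j).card = d)
    -- `e j` enumerates the rows of the submatrices indexed by `S_j`
    (e : Fin n → Fin d → Fin n)
    (U Ustar : Matrix (Fin n) (Fin k) ℝ)
    (hrows : ∀ i, vecNorm (U i) ≤ Real.sqrt (5 * μ₀ * k / n))
    (hrowsStar : ∀ i, vecNorm (Ustar i) ≤ Real.sqrt (μ₀ * k / n))
    -- the truncated submatrices and their spectral-norm bounds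
    (Uhatd : Fin n → Matrix (Fin d) (Fin k) ℝ)
    (hUhatd : ∀ j, specNorm (Uhatd j) ≤ Real.sqrt ((2 - β) * d / n))
    (Vstar : Matrix (Fin n) (Fin k) ℝ)
    (hVrows : ∀ j, vecNorm (Vstar j) ≤ Real.sqrt (μ₀ * k / n))
    (Sig : Matrix (Fin k) (Fin k) ℝ) (hSig : specNorm Sig ≤ σ₁)
    (Bhat : Fin n → Matrix (Fin k) (Fin k) ℝ)
    (hBherm : ∀ j, (Bhat j).IsHermitian)
    (heig : ∀ j l, (hBherm j).eigenvalues l ∈ Set.Icc β (2 - β))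
    (x : Fin n → Fin k → ℝ) (hx : ∑ j, vecNorm (x j) ^ 2 = 1)
    (S : Finset (Fin n)) :
    ∑ j ∈ S, x j ⬝ᵥ
        (((Bhat j)⁻¹ *
            (((n : ℝ) / d) • ∑ i ∈ Sj Ω j, vecMulVec (U i) (Ustar i) -
              ((n : ℝ) / d) • ((Uhatd j)ᵀ * Matrix.of fun r l => Ustar (e j r) l)) *
            Sig).mulVec (Vstar j))
      ≤ (7 / β) * σ₁ * (μ₀ * k) ^ ((3 : ℝ) / 2) * Real.sqrt ((S.card : ℝ) / n) := by
  obtain ⟨hβ0, -⟩ := hβ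
  have hμk : 1 ≤ μ₀ * k := one_le_mul_of_one_le_of_one_le hμ (by exact_mod_cast hk)
  have hσ₁ : 0 ≤ σ₁ := (specNorm_nonneg Sig).trans hSig
  refine (Finset.sum_le_sum fun j _ => dotProduct_inv_mul_sub_mul_mulVec_le (hBherm j) hβ0
    (fun l => (heig j l).1) (by positivity)
    (vecNorm_sampled_outer_sum_mulVec_le (by linarith) _ (hΩ j) hrows hrowsStar)
    (vecNorm_sampled_transpose_mul_mulVec_le hμk hβ0.le (hUhatd j) fun r => hrowsStar (e j r))
    hSig (x j) (hVrows j)).trans ?_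
  have h7 : √5 + √2 ≤ 7 := by
    linarith [(Real.sqrt_le_left (by norm_num : (0 : ℝ) ≤ 3)).mpr (by norm_num : (5 : ℝ) ≤ 3 ^ 2),
      (Real.sqrt_le_left (by norm_num : (0 : ℝ) ≤ 2)).mpr (by norm_num : (2 : ℝ) ≤ 2 ^ 2)]
  have hpow : (μ₀ * k) ^ ((3 : ℝ) / 2) = μ₀ * k * √(μ₀ * k) := by
    rw [show (3 : ℝ) / 2 = 1 + 1 / 2 by norm_num, Real.rpow_add (by linarith), Real.rpow_one,
      Real.sqrt_eq_rpow]
  have hsplit : √(S.card : ℝ) * √(μ₀ * k / n) = √(μ₀ * k) * √((S.card : ℝ) / n) := by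
    rw [← Real.sqrt_mul (Nat.cast_nonneg _), ← Real.sqrt_mul (by linarith)]
    ring_nf
  rw [← Finset.sum_mul, hpow]
  calc (∑ j ∈ S, vecNorm (x j)) * ((√5 * (μ₀ * k) + √2 * (μ₀ * k)) * (σ₁ * √(μ₀ * k / n)) / β)
      ≤ √(S.card : ℝ) * ((√5 * (μ₀ * k) + √2 * (μ₀ * k)) * (σ₁ * √(μ₀ * k / n)) / β) := by
        gcongr
        exact sum_le_sqrt_card_of_sum_sq_le_one hx.le S
    _ = (√5 + √2) / β * σ₁ * (μ₀ * k * √(μ₀ * k)) * √((S.card : ℝ) / n) := by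
        linear_combination ((√5 + √2) / β * σ₁ * (μ₀ * k)) * hsplit
    _ ≤ 7 / β * σ₁ * (μ₀ * k * √(μ₀ * k)) * √((S.card : ℝ) / n) := by gcongr

theorem stmt_6 {n k d : ℕ} (hn : 0 < n) (hk : 0 < k) (hd : 0 < d)
    (μ₀ β σ₁ : ℝ) (hμ : 1 ≤ μ₀) (hβ : β ∈ Set.Ioo (0 : ℝ) 1) (hσ₁ : 0 < σ₁)
    (Ω : Finset (Fin n × Fin n)) (hΩ : ∀ j : Fin n, (Sj Ω j).card = d)
    -- `e j` enumerates the rows of the submatrices indexed by `S_j`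
    (e : Fin n → Fin d → Fin n)
    (he_inj : ∀ j, Function.Injective (e j))
    (he_mem : ∀ j r, e j r ∈ Sj Ω j)
    (U Ustar : Matrix (Fin n) (Fin k) ℝ)
    (hrows : ∀ i, vecNorm (U i) ≤ Real.sqrt (5 * μ₀ * k / n))
    (hrowsStar : ∀ i, vecNorm (Ustar i) ≤ Real.sqrt (μ₀ * k / n))
    -- the truncated submatrices and their spectral-norm bounds
    (Uhatd : Fin n → Matrix (Fin d) (Fin k) ℝ)
    (hUhatd : ∀ j, specNorm (Uhatd j) ≤ Real.sqrt ((2 - β) * d / n))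
    (Vstar : Matrix (Fin n) (Fin k) ℝ)
    (hVrows : ∀ j, vecNorm (Vstar j) ≤ Real.sqrt (μ₀ * k / n))
    (Sig : Matrix (Fin k) (Fin k) ℝ) (hSig : specNorm Sig ≤ σ₁)
    (Bhat : Fin n → Matrix (Fin k) (Fin k) ℝ)
    (hBherm : ∀ j, (Bhat j).IsHermitian)
    (hBpos : ∀ j, (Bhat j).PosDef)
    (heig : ∀ j l, (hBherm j).eigenvalues l ∈ Set.Icc β (2 - β))
    (x : Fin n → Fin k → ℝ) (hx : ∑ j, vecNorm (x j) ^ 2 = 1)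
    (S : Finset (Fin n)) :
    ∑ j ∈ S, x j ⬝ᵥ
        (((Bhat j)⁻¹ *
            (((n : ℝ) / d) • ∑ i ∈ Sj Ω j, vecMulVec (U i) (Ustar i) -
              ((n : ℝ) / d) • ((Uhatd j)ᵀ * Matrix.of fun r l => Ustar (e j r) l)) *
            Sig).mulVec (Vstar j))
      ≤ (7 / β) * σ₁ * (μ₀ * k) ^ ((3 : ℝ) / 2) * Real.sqrt ((S.card : ℝ) / n) :=
  stmt_6_general hk μ₀ β σ₁ hμ hβ Ω hΩ e U Ustar hrows hrowsStar Uhatd hUhatd Vstar hVrows Sig hSig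
    Bhat hBherm heig x hx S
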